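/- arXiv:2402.01953 — 2 statements merged into one kernel-verified Lean document; each statement's English description precedes it below -/
import Mathlib

section
/- Let d = 3 and let Q_1 = [0,1/5]^3 ∈ Q_1^(3)(F^(3)). Then for every real p > 1 and every integer m ≥ 1, E_{p,m}(Q_1, Γ(Q_1)^c) ≥ 16^m (5^m + 1)^{1−p}. -/
open Set MeasureTheory Filter
open scoped Classical

noncomputable section

/-- Points of `ℝ^d` with the Euclidean metric. -/
abbrev Pt (d : ℕ) := EuclideanSpace ℝ (Fin d)

/-- The closed cube `∏ [(lᵢ-1)/5ⁿ, lᵢ/5ⁿ]`. -/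
def cube (d n : ℕ) (l : Fin d → ℕ) : Set (Pt d) :=
  {x | ∀ i, ((l i : ℝ) - 1) / 5 ^ n ≤ x i ∧ x i ≤ (l i : ℝ) / 5 ^ n}

/-- The collection `𝒬ₙ⁽ᵈ⁾` of level-`n` cubes. -/
def Qcol (d n : ℕ) : Set (Set (Pt d)) :=
  {Q | ∃ l : Fin d → ℕ, (∀ i, 1 ≤ l i ∧ l i ≤ 5 ^ n) ∧ Q = cube d n l}

/-- `𝒬ₙ⁽ᵈ⁾(A)`: the level-`n` cubes whose interior meets `A`. -/
def QcolOf (d n : ℕ) (A : Set (Pt d)) : Set (Set (Pt d)) :=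
  {Q | Q ∈ Qcol d n ∧ (interior Q ∩ A).Nonempty}

/-- `F₀⁽ᵈ⁾ = [0,1]^d`. -/
def F0 (d : ℕ) : Set (Pt d) := {x | ∀ i, x i ∈ Icc (0 : ℝ) 1}

/-- `F₁⁽ᵈ⁾`. -/
def F1 (d : ℕ) : Set (Pt d) :=
  F0 d \ ⋃ i : Fin d, {x | (∀ j, j < i → x j ∈ Ioo (2/5 : ℝ) (3/5)) ∧
    x i ∈ Ioo (1/5 : ℝ) (2/5) ∪ Ioo (3/5 : ℝ) (4/5) ∧
    ∀ j, i < j → x j ∈ Ioo (2/5 : ℝ) (3/5)}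

/-- The orientation-preserving affine map from `[0,1]^d` onto the cube indexed by `l` at
level `n`. -/
def psi (d n : ℕ) (l : Fin d → ℕ) (x : Pt d) : Pt d :=
  WithLp.toLp 2 (fun i => ((l i : ℝ) - 1) / 5 ^ n + x i / 5 ^ n)

/-- The approximations `Fₙ⁽ᵈ⁾`. -/
def Fn (d : ℕ) : ℕ → Set (Pt d)
  | 0 => F0 d
  | 1 => F1 d
  | n + 2 => ⋃ l ∈ {l : Fin d → ℕ | cube d 1 l ∈ QcolOf d 1 (F1 d)}, psi d 1 l '' Fn d (n + 1)

/-- The fractal `F⁽ᵈ⁾`. -/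
def Fset (d : ℕ) : Set (Pt d) := ⋂ n, Fn d n

/-- `G₁⁽ᵈ⁾`: union of the level-1 cubes of `F₁⁽ᵈ⁾` which meet the boundary of `[0,1]^d`. -/
def G1 (d : ℕ) : Set (Pt d) :=
  ⋃ Q ∈ {Q | Q ∈ QcolOf d 1 (F1 d) ∧ (Q ∩ frontier (F0 d)).Nonempty}, Q

/-- The approximations `Gₙ⁽ᵈ⁾`. -/
def Gn (d : ℕ) : ℕ → Set (Pt d)
  | 0 => F0 d
  | 1 => G1 d
  | n + 2 => ⋃ l ∈ {l : Fin d → ℕ | cube d 1 l ∈ QcolOf d 1 (G1 d)}, psi d 1 l '' Gn d (n + 1)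

/-- The boundary fractal `G⁽ᵈ⁾ = [0,1]^d ∩ ⋂_{n ≥ 1} Gₙ⁽ᵈ⁾`. -/
def Gset (d : ℕ) : Set (Pt d) := F0 d ∩ ⋂ n, ⋂ (_ : 1 ≤ n), Gn d n

/-- The discrete `p`-energy `𝓔ₚⁿ(f)` on the level-`n` cubes of `F⁽ᵈ⁾`. -/
def energy (d n : ℕ) (p : ℝ) (f : Set (Pt d) → ℝ) : ℝ :=
  (1 / 2) * ∑' Q : QcolOf d n (Fset d), ∑' Q' : QcolOf d n (Fset d),
    if ((Q : Set (Pt d)) ∩ (Q' : Set (Pt d))).Nonempty then |f Q - f Q'| ^ p else 0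

/-- `Sᵐ(A)`: level-`(n+m)` cubes of `F⁽ᵈ⁾` contained in some cube of `A`. -/
def Sm (d n m : ℕ) (A : Set (Set (Pt d))) : Set (Set (Pt d)) :=
  {Q | Q ∈ QcolOf d (n + m) (Fset d) ∧ ∃ Q' ∈ A, Q ⊆ Q'}

/-- The effective `p`-conductance `𝓔_{p,m}(A₁, A₂)`. -/
def conduct (d n m : ℕ) (p : ℝ) (A₁ A₂ : Set (Set (Pt d))) : ℝ :=
  sInf {e : ℝ | ∃ f : Set (Pt d) → ℝ,
    (∀ Q ∈ Sm d n m A₁, f Q = 1) ∧ (∀ Q ∈ Sm d n m A₂, f Q = 0) ∧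
    e = energy d (n + m) p f}

/-- `Γ(Q)`: level-`n` cubes of `F⁽ᵈ⁾` meeting `Q`. -/
def Gam (d n : ℕ) (Q : Set (Pt d)) : Set (Set (Pt d)) :=
  {Q' | Q' ∈ QcolOf d n (Fset d) ∧ (Q' ∩ Q).Nonempty}

/-- `Γ(Q)ᶜ = 𝒬ₙ⁽ᵈ⁾(F⁽ᵈ⁾) \ Γ(Q)`. -/
def GamC (d n : ℕ) (Q : Set (Pt d)) : Set (Set (Pt d)) :=
  QcolOf d n (Fset d) \ Gam d n Q

/-- The corner cube `[0, 1/5]^d`. -/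
def Qone (d : ℕ) : Set (Pt d) := {x | ∀ i, x i ∈ Icc (0 : ℝ) (1/5)}

/-- The center cube `[2/5, 3/5]^d`. -/
def Qtwo (d : ℕ) : Set (Pt d) := {x | ∀ i, x i ∈ Icc (2/5 : ℝ) (3/5)}

end

/-!
Inside `Q₁ = [0,1/5]³` run `16 ^ m` parallel paths of level-`(1 + m)` cubes in the first
coordinate direction, with the base-`5` digits of the other two indices avoiding the middle
digit. Every removed piece of `F₁` has two coordinates in the middle interval, so at every scale
these cubes survive and the paths lie in `F⁽³⁾`. Each path has `5 ^ m + 1` steps from a cube of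
`Q₁` to one inside `[2/5, 3/5] × [0, 1/5]² ∈ Γ(Q₁)ᶜ`, so an admissible function drops from `1` to
`0` along it and Hölder's inequality bounds its energy on the path below by `(5 ^ m + 1) ^ (1 - p)`.
The paths share no edges, so these contributions add up.
-/

section Cubes

variable {d n : ℕ}

lemma cube_le_of_subset {v w : Fin d → ℕ} (h : cube d n v ⊆ cube d n w) (i : Fin d) :
    v i ≤ w i := by
  have h5 : (0 : ℝ) < 5 ^ n := by positivity
  have hcorner : (WithLp.toLp 2 fun j => (v j : ℝ) / 5 ^ n : Pt d) ∈ cube d n v :=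
    fun j => ⟨div_le_div_of_nonneg_right (by linarith) h5.le, le_rfl⟩
  exact_mod_cast (div_le_div_iff_of_pos_right h5).mp (h hcorner i).2

lemma cube_injective : Function.Injective (cube d n) := fun _ _ h =>
  funext fun i => le_antisymm (cube_le_of_subset h.le i) (cube_le_of_subset h.ge i)

lemma cube_inter_nonempty {v w : Fin d → ℕ} (h : ∀ i, v i ≤ w i ∧ w i ≤ v i + 1) :
    (cube d n v ∩ cube d n w).Nonempty := by
  have h5 : (0 : ℝ) < 5 ^ n := by positivity
  refine ⟨WithLp.toLp 2 fun i => (v i : ℝ) / 5 ^ n, fun i => ?_, fun i => ?_⟩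
  · exact ⟨div_le_div_of_nonneg_right (by linarith) h5.le, le_rfl⟩
  · have hv : (v i : ℝ) ≤ w i := by exact_mod_cast (h i).1
    have hw : (w i : ℝ) ≤ v i + 1 := by exact_mod_cast (h i).2
    exact ⟨div_le_div_of_nonneg_right (by linarith) h5.le, div_le_div_of_nonneg_right hv h5.le⟩

lemma cube_subset_cube_div (m : ℕ) (w : Fin d → ℕ) :
    cube d (n + m) (fun i => w i + 1) ⊆ cube d n (fun i => w i / 5 ^ m + 1) := by
  intro x hx i
  have hlo : ((w i / 5 ^ m : ℕ) : ℝ) * 5 ^ m ≤ w i := by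
    exact_mod_cast Nat.div_mul_le_self (w i) (5 ^ m)
  have hhi : (w i : ℝ) + 1 ≤ ((w i / 5 ^ m : ℕ) + 1) * 5 ^ m := by
    have := Nat.lt_div_mul_add (a := w i) (by positivity : 0 < 5 ^ m)
    exact_mod_cast (by rw [add_mul, one_mul]; omega : w i + 1 ≤ (w i / 5 ^ m + 1) * 5 ^ m)
  obtain ⟨hx₁, hx₂⟩ := hx i
  push_cast at hx₁ hx₂ ⊢
  rw [add_sub_cancel_right] at hx₁ ⊢
  rw [pow_add] at hx₁ hx₂
  constructor
  · calc ((w i / 5 ^ m : ℕ) : ℝ) / 5 ^ n = (w i / 5 ^ m : ℕ) * 5 ^ m / (5 ^ n * 5 ^ m) := by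
          field_simp
      _ ≤ w i / (5 ^ n * 5 ^ m) := by gcongr
      _ ≤ x i := hx₁
  · calc x i ≤ (w i + 1) / (5 ^ n * 5 ^ m) := hx₂
      _ ≤ ((w i / 5 ^ m : ℕ) + 1) * 5 ^ m / (5 ^ n * 5 ^ m) := by gcongr
      _ = ((w i / 5 ^ m : ℕ) + 1) / 5 ^ n := by field_simp

lemma psi_apply (l : Fin d → ℕ) (y : Pt d) (i : Fin d) :
    psi d n l y i = ((l i : ℝ) - 1) / 5 ^ n + y i / 5 ^ n := rfl

lemma psi_mem_cube (l : Fin d → ℕ) {y : Pt d} (hy : y ∈ F0 d) : psi d n l y ∈ cube d n l := by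
  intro i
  have h5 : (0 : ℝ) < 5 ^ n := by positivity
  obtain ⟨hy₀, hy₁⟩ := hy i
  rw [psi_apply]
  constructor
  · linarith [div_nonneg hy₀ h5.le]
  · rw [← add_div]; gcongr; linarith

lemma psi_mem_interior_cube (l : Fin d → ℕ) {y : Pt d} (hy : ∀ i, y i ∈ Ioo (0 : ℝ) 1) :
    psi d n l y ∈ interior (cube d n l) := by
  have h5 : (0 : ℝ) < 5 ^ n := by positivity
  set U : Set (Pt d) := ⋂ i, (fun x : Pt d => x i) ⁻¹' Ioo (((l i : ℝ) - 1) / 5 ^ n) (l i / 5 ^ n)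
  have hU : IsOpen U := isOpen_iInter_of_finite fun i =>
    isOpen_Ioo.preimage ((continuous_apply i).comp (PiLp.continuous_ofLp 2 _))
  refine interior_maximal (fun x hx i => ?_) hU (mem_iInter.mpr fun i => ?_)
  · exact Ioo_subset_Icc_self (mem_iInter.mp hx i)
  · obtain ⟨hy₀, hy₁⟩ := hy i
    simp only [mem_preimage, mem_Ioo, psi_apply]
    constructor
    · linarith [div_pos hy₀ h5]
    · rw [← add_div]; gcongr; linarith

lemma cube_mem_QcolOf {A : Set (Pt d)} {l : Fin d → ℕ} (hl : ∀ i, 1 ≤ l i ∧ l i ≤ 5 ^ n)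
    {y : Pt d} (hy : ∀ i, y i ∈ Ioo (0 : ℝ) 1) (hA : psi d n l y ∈ A) :
    cube d n l ∈ QcolOf d n A :=
  ⟨⟨l, hl, rfl⟩, psi d n l y, psi_mem_interior_cube l hy, hA⟩


lemma cube_subset_F0 {l : Fin d → ℕ} (hl : ∀ i, 1 ≤ l i ∧ l i ≤ 5 ^ n) :
    cube d n l ⊆ F0 d := by
  intro x hx i
  have h5 : (0 : ℝ) < 5 ^ n := by positivity
  have h₁ : (1 : ℝ) ≤ l i := by exact_mod_cast (hl i).1
  have h₂ : (l i : ℝ) ≤ 5 ^ n := by exact_mod_cast (hl i).2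
  obtain ⟨hx₁, hx₂⟩ := hx i
  exact ⟨(div_nonneg (by linarith) h5.le).trans hx₁, hx₂.trans ((div_le_one h5).mpr h₂)⟩

end Cubes

lemma QcolOf_finite {d : ℕ} (n : ℕ) (A : Set (Pt d)) : (QcolOf d n A).Finite := by
  refine ((Set.finite_Iic (fun _ : Fin d => 5 ^ n)).image (cube d n)).subset ?_
  rintro _ ⟨⟨l, hl, rfl⟩, -⟩
  exact ⟨l, fun i => (hl i).2, rfl⟩

section Fractal
variable {d : ℕ}

lemma eq_three_of_mem_cube {l : Fin d → ℕ} {x : Pt d} (hx : x ∈ cube d 1 l) {i : Fin d}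
    (hi : x i ∈ Ioo (2 / 5 : ℝ) (3 / 5)) : l i = 3 := by
  obtain ⟨hx₁, hx₂⟩ := hx i
  obtain ⟨hi₁, hi₂⟩ := hi
  rw [pow_one] at hx₁ hx₂
  have h₁ : (2 : ℝ) < l i := by linarith
  have h₂ : (l i : ℝ) < 4 := by linarith
  have : 2 < l i := by exact_mod_cast h₁
  have : l i < 4 := by exact_mod_cast h₂
  omega

/-- The removed pieces of `F₁` need all but one coordinate in the middle interval. -/
lemma cube_subset_F1 {l : Fin d → ℕ} (hl : ∀ i, 1 ≤ l i ∧ l i ≤ 5) {i j : Fin d} (hij : i ≠ j)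
    (hi : l i ≠ 3) (hj : l j ≠ 3) : cube d 1 l ⊆ F1 d := by
  intro x hx
  refine ⟨cube_subset_F0 (by simpa using hl) hx, fun hrem => ?_⟩
  obtain ⟨k, hlt, -, hgt⟩ := mem_iUnion.mp hrem
  have hmid : ∀ a, a ≠ k → l a = 3 := fun a hak => by
    rcases lt_or_gt_of_ne hak with h | h
    exacts [eq_three_of_mem_cube hx (hlt a h), eq_three_of_mem_cube hx (hgt a h)]
  by_cases hik : i = k
  · exact hj (hmid j (hik ▸ hij.symm))
  · exact hi (hmid i hik)

/-- A point of `F` in the open unit cube, being the fixed point of `psi d 1 (fun _ => 2)`. -/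
noncomputable def quarter : Pt d := WithLp.toLp 2 fun _ => 1 / 4

lemma quarter_mem_Ioo (i : Fin d) : (quarter : Pt d) i ∈ Ioo (0 : ℝ) 1 := by
  norm_num [quarter]

lemma psi_mapsTo_Fn {l : Fin d → ℕ} (hl : ∀ i, 1 ≤ l i ∧ l i ≤ 5) (hsub : cube d 1 l ⊆ F1 d) :
    ∀ n, MapsTo (psi d 1 l) (Fn d n) (Fn d (n + 1))
  | 0, _, hy => hsub (psi_mem_cube l hy)
  | n + 1, _, hy => by
    have hq : psi d 1 l quarter ∈ F1 d :=
      hsub (psi_mem_cube l fun i => Ioo_subset_Icc_self (quarter_mem_Ioo i))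
    exact mem_iUnion₂.mpr ⟨l, cube_mem_QcolOf (by simpa using hl) quarter_mem_Ioo hq,
      mem_image_of_mem _ hy⟩

lemma Fset_subset_Fn (n : ℕ) : Fset d ⊆ Fn d n := iInter_subset _ n

lemma psi_mem_Fset {l : Fin d → ℕ} (hl : ∀ i, 1 ≤ l i ∧ l i ≤ 5) (hsub : cube d 1 l ⊆ F1 d)
    {y : Pt d} (hy : y ∈ Fset d) : psi d 1 l y ∈ Fset d := by
  refine mem_iInter.mpr fun n => ?_
  cases n with
  | zero => exact sdiff_subset (psi_mapsTo_Fn hl hsub 0 (Fset_subset_Fn 0 hy))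
  | succ n => exact psi_mapsTo_Fn hl hsub n (Fset_subset_Fn n hy)

lemma quarter_mem_Fset (hd : 2 ≤ d) : (quarter : Pt d) ∈ Fset d := by
  have hfix : psi d 1 (fun _ => 2) quarter = quarter := by
    ext i; norm_num [psi_apply, quarter]
  have hsub : cube d 1 (fun _ => 2) ⊆ F1 d :=
    cube_subset_F1 (fun _ => by norm_num) (i := ⟨0, by omega⟩) (j := ⟨1, by omega⟩)
      (by simp) (by norm_num) (by norm_num)
  refine mem_iInter.mpr fun n => ?_
  induction n with
  | zero => exact fun i => Ioo_subset_Icc_self (quarter_mem_Ioo i)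
  | succ n ih => exact hfix ▸ psi_mapsTo_Fn (fun _ => by norm_num) hsub n ih

lemma psi_succ (N : ℕ) (w : Fin d → ℕ) (y : Pt d) :
    psi d (N + 1) (fun i => w i + 1) y =
      psi d N (fun i => w i / 5 + 1) (psi d 1 (fun i => w i % 5 + 1) y) := by
  ext i
  have hw : (w i : ℝ) = 5 * (w i / 5 : ℕ) + (w i % 5 : ℕ) := by
    exact_mod_cast (Nat.div_add_mod (w i) 5).symm
  simp only [psi_apply, Nat.cast_add, Nat.cast_one, add_sub_cancel_right, hw, pow_succ]
  field_simp
  ring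

lemma psi_mem_Fset_of_digits :
    ∀ (N : ℕ) (w : Fin d → ℕ), (∀ i, w i < 5 ^ N) →
      (∀ k < N, ∃ i j, i ≠ j ∧ w i / 5 ^ k % 5 ≠ 2 ∧ w j / 5 ^ k % 5 ≠ 2) →
      ∀ {y : Pt d}, y ∈ Fset d → psi d N (fun i => w i + 1) y ∈ Fset d
  | 0, w, hw, _, y, hy => by
    convert hy using 1
    ext i
    simp [psi_apply, show w i = 0 by simpa using hw i]
  | N + 1, w, hw, hdig, y, hy => by
    rw [psi_succ]
    refine psi_mem_Fset_of_digits N _ (fun i => ?_) (fun k hk => ?_) ?_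
    · exact Nat.div_lt_of_lt_mul (by simpa [pow_succ'] using hw i)
    · simpa [Nat.div_div_eq_div_mul, ← pow_succ'] using hdig (k + 1) (by omega)
    · obtain ⟨i, j, hij, hi, hj⟩ := hdig 0 (by omega)
      simp only [pow_zero, Nat.div_one] at hi hj
      have hl : ∀ a, 1 ≤ w a % 5 + 1 ∧ w a % 5 + 1 ≤ 5 := fun a => ⟨by omega, by omega⟩
      exact psi_mem_Fset hl (cube_subset_F1 hl hij (by omega) (by omega)) hy

lemma cube_mem_QcolOf_Fset (hd : 2 ≤ d) {N : ℕ} {w : Fin d → ℕ} (hw : ∀ i, w i < 5 ^ N)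
    (hdig : ∀ k < N, ∃ i j, i ≠ j ∧ w i / 5 ^ k % 5 ≠ 2 ∧ w j / 5 ^ k % 5 ≠ 2) :
    cube d N (fun i => w i + 1) ∈ QcolOf d N (Fset d) :=
  cube_mem_QcolOf (fun i => ⟨by omega, hw i⟩) quarter_mem_Ioo
    (psi_mem_Fset_of_digits N w hw hdig (quarter_mem_Fset hd))

end Fractal

section Energy
variable {d n : ℕ} (p : ℝ) (f : Set (Pt d) → ℝ)

lemma energy_eq_sum :
    energy d n p f = 1 / 2 * ∑ e ∈ (QcolOf_finite n (Fset d)).toFinset ×ˢ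
        (QcolOf_finite n (Fset d)).toFinset,
      if (e.1 ∩ e.2).Nonempty then |f e.1 - f e.2| ^ p else 0 := by
  have hsum : ∀ F : Set (Pt d) → ℝ, ∑' Q : QcolOf d n (Fset d), F Q =
      ∑ Q ∈ (QcolOf_finite n (Fset d)).toFinset, F Q := fun F => by
    rw [tsum_subtype]
    refine (tsum_eq_sum (s := (QcolOf_finite n (Fset d)).toFinset) fun Q hQ => ?_).trans
      (Finset.sum_congr rfl fun Q hQ => ?_)
    · exact indicator_of_notMem (by simpa using hQ) F
    · exact indicator_of_mem (by simpa using hQ) F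
  rw [energy, Finset.sum_product]
  congr 1
  calc ∑' Q : QcolOf d n (Fset d), ∑' Q' : QcolOf d n (Fset d),
        (if ((Q : Set (Pt d)) ∩ Q').Nonempty then |f Q - f Q'| ^ p else 0)
      = ∑' Q : QcolOf d n (Fset d), ∑ Q' ∈ (QcolOf_finite n (Fset d)).toFinset,
          (if ((Q : Set (Pt d)) ∩ Q').Nonempty then |f Q - f Q'| ^ p else 0) :=
        tsum_congr fun Q => hsum fun Q' => if ((Q : Set (Pt d)) ∩ Q').Nonempty then
          |f Q - f Q'| ^ p else 0
    _ = _ := hsum fun Q => ∑ Q' ∈ (QcolOf_finite n (Fset d)).toFinset,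
          if (Q ∩ Q').Nonempty then |f Q - f Q'| ^ p else 0

/-- Each unordered edge is counted twice in `energy`, so a set of oriented edges containing no
edge together with its reversal contributes at most `energy`. -/
lemma sum_le_energy (E : Finset (Set (Pt d) × Set (Pt d)))
    (hE : ∀ e ∈ E, e.1 ∈ QcolOf d n (Fset d) ∧ e.2 ∈ QcolOf d n (Fset d) ∧ (e.1 ∩ e.2).Nonempty)
    (hswap : ∀ e ∈ E, e.swap ∉ E) :
    ∑ e ∈ E, |f e.1 - f e.2| ^ p ≤ energy d n p f := by
  set g : Set (Pt d) × Set (Pt d) → ℝ := fun e =>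
    if (e.1 ∩ e.2).Nonempty then |f e.1 - f e.2| ^ p else 0
  have hg₀ : ∀ e, 0 ≤ g e := fun e => by
    simp only [g]; split_ifs <;> positivity
  have hg_swap : ∀ e, g e.swap = g e := fun e => by
    simp only [g, Prod.fst_swap, Prod.snd_swap, inter_comm e.2, abs_sub_comm (f e.2)]
  have hEg : ∑ e ∈ E, |f e.1 - f e.2| ^ p = ∑ e ∈ E, g e :=
    Finset.sum_congr rfl fun e he => (if_pos (hE e he).2.2).symm
  have hE' : ∑ e ∈ E.image Prod.swap, g e = ∑ e ∈ E, g e := by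
    rw [Finset.sum_image fun x _ y _ h => Prod.swap_injective h]
    exact Finset.sum_congr rfl fun e _ => hg_swap e
  have hdisj : Disjoint E (E.image Prod.swap) := by
    refine Finset.disjoint_left.mpr fun e he he_swap => ?_
    obtain ⟨e', he', rfl⟩ := Finset.mem_image.mp he_swap
    exact hswap e' he' he
  have hsub : E ∪ E.image Prod.swap ⊆ (QcolOf_finite n (Fset d)).toFinset ×ˢ
      (QcolOf_finite n (Fset d)).toFinset := by
    intro e he
    rcases Finset.mem_union.mp he with he | he
    · simpa using ⟨(hE e he).1, (hE e he).2.1⟩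
    · obtain ⟨e', he', rfl⟩ := Finset.mem_image.mp he
      simpa using ⟨(hE e' he').2.1, (hE e' he').1⟩
  rw [energy_eq_sum, hEg]
  calc ∑ e ∈ E, g e = 1 / 2 * ∑ e ∈ E ∪ E.image Prod.swap, g e := by
        rw [Finset.sum_union hdisj, hE']; ring
    _ ≤ _ := by gcongr

end Energy

lemma le_conduct {d n m : ℕ} {p c : ℝ} {A₁ A₂ : Set (Set (Pt d))}
    (hdisj : ∀ Q₁ ∈ A₁, ∀ Q₂ ∈ A₂, Disjoint Q₁ Q₂)
    (h : ∀ f : Set (Pt d) → ℝ, (∀ Q ∈ Sm d n m A₁, f Q = 1) → (∀ Q ∈ Sm d n m A₂, f Q = 0) →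
      c ≤ energy d (n + m) p f) :
    c ≤ conduct d n m p A₁ A₂ := by
  have hS : Disjoint (Sm d n m A₁) (Sm d n m A₂) := by
    refine Set.disjoint_left.mpr fun Q ⟨hQ, Q₁, hQ₁, hsub₁⟩ ⟨_, Q₂, hQ₂, hsub₂⟩ => ?_
    obtain ⟨x, hx, -⟩ := hQ.2
    exact Set.disjoint_left.mp (hdisj Q₁ hQ₁ Q₂ hQ₂) (hsub₁ (interior_subset hx))
      (hsub₂ (interior_subset hx))
  refine le_csInf ⟨_, (Sm d n m A₁).indicator 1, fun Q hQ => indicator_of_mem hQ 1,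
    fun Q hQ => indicator_of_notMem (Set.disjoint_right.mp hS hQ) 1, rfl⟩ ?_
  rintro _ ⟨f, hf₁, hf₀, rfl⟩
  exact h f hf₁ hf₀

lemma rpow_one_sub_le_sum_of_chain {p : ℝ} (hp : 1 ≤ p) {K : ℕ} (g : ℕ → ℝ) (h₀ : g 0 = 1)
    (hK : g K = 0) :
    (K : ℝ) ^ (1 - p) ≤ ∑ t ∈ Finset.range K, |g t - g (t + 1)| ^ p := by
  have hKpos : (0 : ℝ) < K := by
    rcases Nat.eq_zero_or_pos K with rfl | hK'
    · norm_num [h₀] at hK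
    · exact_mod_cast hK'
  have hsum : 1 ≤ ∑ t ∈ Finset.range K, |g t - g (t + 1)| := by
    calc (1 : ℝ) = |∑ t ∈ Finset.range K, (g t - g (t + 1))| := by
          rw [Finset.sum_range_sub', h₀, hK]; norm_num
      _ ≤ _ := Finset.abs_sum_le_sum_abs _ _
  have hholder := Real.rpow_sum_le_const_mul_sum_rpow (Finset.range K)
    (fun t => g t - g (t + 1)) hp
  rw [Finset.card_range] at hholder
  have h1 : 1 ≤ (K : ℝ) ^ (p - 1) * ∑ t ∈ Finset.range K, |g t - g (t + 1)| ^ p :=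
    (Real.one_le_rpow hsum (by linarith)).trans hholder
  calc (K : ℝ) ^ (1 - p) ≤ (K : ℝ) ^ (1 - p) *
        ((K : ℝ) ^ (p - 1) * ∑ t ∈ Finset.range K, |g t - g (t + 1)| ^ p) :=
        le_mul_of_one_le_right (by positivity) h1
    _ = _ := by
        rw [← mul_assoc, ← Real.rpow_add hKpos, show 1 - p + (p - 1) = 0 by ring,
          Real.rpow_zero, one_mul]

lemma cube_one_eq_Qone (d : ℕ) : cube d 1 (fun _ => 1) = Qone d := by
  ext x
  simp [cube, Qone]

lemma disjoint_Qone_of_mem_GamC {d : ℕ} {Q : Set (Pt d)} (hQ : Q ∈ GamC d 1 (Qone d)) :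
    Disjoint (Qone d) Q :=
  Set.disjoint_left.mpr fun x hx₁ hx => hQ.2 ⟨hQ.1, x, hx, hx₁⟩

section Paths
variable (m : ℕ)

/-- The number whose base-`5` digit of weight `5 ^ k` is `σ k`, read in `{0, 1, 3, 4}`. -/
def avoidIdx (σ : Fin m → Fin 4) : ℕ := finFunctionFinEquiv fun k => (2 : Fin 5).succAbove (σ k)

lemma avoidIdx_lt (σ : Fin m → Fin 4) : avoidIdx m σ < 5 ^ m := Fin.isLt _

lemma avoidIdx_digit_ne_two (σ : Fin m → Fin 4) (k : ℕ) : avoidIdx m σ / 5 ^ k % 5 ≠ 2 := by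
  rcases lt_or_ge k m with hk | hk
  · rw [avoidIdx, ← finFunctionFinEquiv_symm_apply_val _ ⟨k, hk⟩, Equiv.symm_apply_apply]
    exact fun h => Fin.succAbove_ne (2 : Fin 5) (σ ⟨k, hk⟩) (Fin.ext h)
  · rw [Nat.div_eq_of_lt ((avoidIdx_lt m σ).trans_le (Nat.pow_le_pow_right (by norm_num) hk))]
    norm_num

lemma avoidIdx_injective : Function.Injective (avoidIdx m) := fun _ _ h =>
  funext fun k => Fin.succAbove_right_injective (congrFun (finFunctionFinEquiv.injective
    (Fin.val_injective h)) k)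

/-- Zero-based index of the `t`-th cube of a path in the first coordinate direction at level
`1 + m`: it starts in `Q₁` at `t = 0` and ends in `[2/5, 3/5] × [0, 1/5]²` at `t = 5 ^ m + 1`. -/
def pathIdx (σ τ : Fin m → Fin 4) (t : ℕ) : Fin 3 → ℕ := ![5 ^ m - 1 + t, avoidIdx m σ, avoidIdx m τ]

def pathCube (σ τ : Fin m → Fin 4) (t : ℕ) : Set (Pt 3) :=
  cube 3 (1 + m) fun i => pathIdx m σ τ t i + 1

lemma pathCube_mem_QcolOf (σ τ : Fin m → Fin 4) {t : ℕ} (ht : t ≤ 5 ^ m + 1) :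
    pathCube m σ τ t ∈ QcolOf 3 (1 + m) (Fset 3) := by
  have h5 : 1 ≤ 5 ^ m := Nat.one_le_pow _ _ (by norm_num)
  have hpow : 5 ^ (1 + m) = 5 * 5 ^ m := by rw [pow_add, pow_one]
  refine cube_mem_QcolOf_Fset (by norm_num) (fun i => ?_) fun k _ =>
    ⟨1, 2, by decide, avoidIdx_digit_ne_two m σ k, avoidIdx_digit_ne_two m τ k⟩
  have := avoidIdx_lt m σ
  have := avoidIdx_lt m τ
  fin_cases i <;> simp [pathIdx] <;> omega

lemma pathCube_inter_succ (σ τ : Fin m → Fin 4) (t : ℕ) :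
    (pathCube m σ τ t ∩ pathCube m σ τ (t + 1)).Nonempty :=
  cube_inter_nonempty fun i => by fin_cases i <;> simp [pathIdx, ← add_assoc]

lemma pathCube_injective {σ τ σ' τ' : Fin m → Fin 4} {t t' : ℕ}
    (h : pathCube m σ τ t = pathCube m σ' τ' t') : σ = σ' ∧ τ = τ' ∧ t = t' := by
  have hidx := cube_injective h
  have h0 := congrFun hidx 0
  have h1 := congrFun hidx 1
  have h2 := congrFun hidx 2
  simp only [pathIdx, Matrix.cons_val_zero, Matrix.cons_val_one, Matrix.cons_val_two,
    Matrix.head_cons, Matrix.tail_cons, add_left_inj] at h0 h1 h2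
  exact ⟨avoidIdx_injective m h1, avoidIdx_injective m h2, by
    have := Nat.one_le_pow m 5 (by norm_num); omega⟩

lemma pathCube_zero_mem_Sm (σ τ : Fin m → Fin 4) :
    pathCube m σ τ 0 ∈ Sm 3 1 m {Qone 3} := by
  refine ⟨pathCube_mem_QcolOf m σ τ (Nat.zero_le _), Qone 3, rfl, ?_⟩
  have hparent : (fun i => pathIdx m σ τ 0 i / 5 ^ m + 1) = fun _ => 1 := by
    have := avoidIdx_lt m σ
    have := avoidIdx_lt m τ
    funext i
    fin_cases i <;> simp [pathIdx, Nat.div_eq_of_lt, *]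
  rw [← cube_one_eq_Qone, ← hparent]
  exact cube_subset_cube_div m _

lemma pathCube_last_mem_Sm (σ τ : Fin m → Fin 4) :
    pathCube m σ τ (5 ^ m + 1) ∈ Sm 3 1 m (GamC 3 1 (Qone 3)) := by
  set parent : Fin 3 → ℕ := fun i => pathIdx m σ τ (5 ^ m + 1) i / 5 ^ m
  have hparent : parent = ![2, 0, 0] := by
    have := avoidIdx_lt m σ
    have := avoidIdx_lt m τ
    have h5 : 0 < 5 ^ m := by positivity
    funext i
    fin_cases i <;> simp [parent, pathIdx, Nat.div_eq_of_lt, *]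
    rw [show 5 ^ m - 1 + (5 ^ m + 1) = 2 * 5 ^ m by omega, Nat.mul_div_cancel _ h5]
  refine ⟨pathCube_mem_QcolOf m σ τ le_rfl, cube 3 1 fun i => parent i + 1, ⟨?_, ?_⟩,
    cube_subset_cube_div m _⟩
  · rw [hparent]
    refine cube_mem_QcolOf_Fset (by norm_num) (fun i => by fin_cases i <;> simp) fun k hk =>
      ⟨1, 2, by decide, ?_⟩
    obtain rfl : k = 0 := by omega
    simp
  · rintro ⟨-, x, hx, hx₁⟩
    have h₁ := (hx 0).1
    norm_num [hparent] at h₁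
    have h₂ : x 0 ≤ 1 / 5 := (hx₁ 0).2
    linarith

end Paths

noncomputable def pathEdges (m : ℕ) : Finset (Set (Pt 3) × Set (Pt 3)) :=
  (Finset.univ ×ˢ Finset.range (5 ^ m + 1)).image
    fun x : ((Fin m → Fin 4) × (Fin m → Fin 4)) × ℕ =>
      (pathCube m x.1.1 x.1.2 x.2, pathCube m x.1.1 x.1.2 (x.2 + 1))

lemma mem_pathEdges {m : ℕ} {e : Set (Pt 3) × Set (Pt 3)} (he : e ∈ pathEdges m) :
    e.1 ∈ QcolOf 3 (1 + m) (Fset 3) ∧ e.2 ∈ QcolOf 3 (1 + m) (Fset 3) ∧ (e.1 ∩ e.2).Nonempty := by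
  obtain ⟨⟨⟨σ, τ⟩, t⟩, hx, rfl⟩ := Finset.mem_image.mp he
  have ht : t < 5 ^ m + 1 := by simpa using hx
  exact ⟨pathCube_mem_QcolOf m σ τ ht.le, pathCube_mem_QcolOf m σ τ ht,
    pathCube_inter_succ m σ τ t⟩

lemma swap_notMem_pathEdges {m : ℕ} {e : Set (Pt 3) × Set (Pt 3)} (he : e ∈ pathEdges m) :
    e.swap ∉ pathEdges m := by
  obtain ⟨⟨⟨σ, τ⟩, t⟩, -, rfl⟩ := Finset.mem_image.mp he
  rintro he'
  obtain ⟨⟨⟨σ', τ'⟩, t'⟩, -, h⟩ := Finset.mem_image.mp he'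
  obtain ⟨-, -, h₁⟩ := pathCube_injective m (Prod.ext_iff.mp h).1
  obtain ⟨-, -, h₂⟩ := pathCube_injective m (Prod.ext_iff.mp h).2
  omega

lemma sum_pathEdges (m : ℕ) (g : Set (Pt 3) → Set (Pt 3) → ℝ) :
    ∑ e ∈ pathEdges m, g e.1 e.2 = ∑ στ : (Fin m → Fin 4) × (Fin m → Fin 4),
      ∑ t ∈ Finset.range (5 ^ m + 1), g (pathCube m στ.1 στ.2 t) (pathCube m στ.1 στ.2 (t + 1)) := by
  rw [pathEdges, Finset.sum_image, Finset.sum_product]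
  rintro ⟨⟨σ, τ⟩, t⟩ - ⟨⟨σ', τ'⟩, t'⟩ - h
  obtain ⟨rfl, rfl, rfl⟩ := pathCube_injective m (Prod.ext_iff.mp h).1
  rfl

theorem statement3_general (p : ℝ) (hp : 1 < p) (m : ℕ) :
    (16 : ℝ) ^ m * (5 ^ m + 1 : ℝ) ^ (1 - p) ≤
      conduct 3 1 m p {Qone 3} (GamC 3 1 (Qone 3)) := by
  refine le_conduct (fun Q₁ hQ₁ Q₂ hQ₂ => hQ₁ ▸ disjoint_Qone_of_mem_GamC hQ₂) fun f hf₁ hf₀ => ?_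
  calc (16 : ℝ) ^ m * (5 ^ m + 1 : ℝ) ^ (1 - p)
      = ∑ _στ : (Fin m → Fin 4) × (Fin m → Fin 4), ((5 ^ m + 1 : ℕ) : ℝ) ^ (1 - p) := by
        simp [Finset.card_univ, ← mul_pow]
    _ ≤ ∑ στ : (Fin m → Fin 4) × (Fin m → Fin 4), ∑ t ∈ Finset.range (5 ^ m + 1),
          |f (pathCube m στ.1 στ.2 t) - f (pathCube m στ.1 στ.2 (t + 1))| ^ p :=
        Finset.sum_le_sum fun στ _ => rpow_one_sub_le_sum_of_chain hp.le _
          (hf₁ _ (pathCube_zero_mem_Sm m στ.1 στ.2)) (hf₀ _ (pathCube_last_mem_Sm m στ.1 στ.2))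
    _ = ∑ e ∈ pathEdges m, |f e.1 - f e.2| ^ p := (sum_pathEdges m fun Q Q' => |f Q - f Q'| ^ p).symm
    _ ≤ energy 3 (1 + m) p f :=
        sum_le_energy p f _ (fun e he => mem_pathEdges he) fun e he => swap_notMem_pathEdges he

/-- Lower bound on the conductance of the corner cube `Q₁ = [0,1/5]³` in `F⁽³⁾`. -/
theorem statement3 (p : ℝ) (hp : 1 < p) (m : ℕ) (hm : 1 ≤ m) :
    (16 : ℝ) ^ m * (5 ^ m + 1 : ℝ) ^ (1 - p) ≤
      conduct 3 1 m p {Qone 3} (GamC 3 1 (Qone 3)) :=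
  statement3_general p hp m
end

section
/- Let d = 2 and let Q_2 = [2/5,3/5]^2 ∈ Q_1^(2)(F^(2)). Then for every real p > 1 and every integer m ≥ 1, E_{p,m}(Q_2, Γ(Q_2)^c) ≤ 4. -/
open Set MeasureTheory Filter
open scoped Classical

/-!
Test the conductance with the indicator of the subcubes of `Q₂`. Its energy only sees touching
pairs of cubes of `F⁽²⁾` with one cube inside `Q₂` and one outside. A cube across an edge of `Q₂`
lies in one of the four arms `(1/5,2/5) × (2/5,3/5)`, … removed in `F₁⁽²⁾`, so the only such pairs
are the four diagonal pairs at the corners of `Q₂`; each is counted twice with weight `1/2`.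
-/

lemma interior_cube (d n : ℕ) (l : Fin d → ℕ) :
    interior (cube d n l) =
      {x | ∀ i, ((l i : ℝ) - 1) / 5 ^ n < x i ∧ x i < (l i : ℝ) / 5 ^ n} := by
  have hcube : cube d n l = PiLp.homeomorph 2 (fun _ : Fin d => ℝ) ⁻¹'
      univ.pi fun i => Icc (((l i : ℝ) - 1) / 5 ^ n) ((l i : ℝ) / 5 ^ n) := by
    ext x
    simp [cube, PiLp.homeomorph, -Set.pi_univ_Icc]
  rw [hcube, ← Homeomorph.preimage_interior, interior_pi_set finite_univ]
  ext x
  simp [PiLp.homeomorph]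

lemma div_five_pow_eq_mul_div (a : ℝ) (n m : ℕ) : a / 5 ^ n = a * 5 ^ m / 5 ^ (n + m) := by
  rw [pow_add]
  field_simp

/-- `k i * 5 ^ m < l i + 5 ^ m` is `(k i - 1) * 5 ^ m < l i` without truncated subtraction. -/
lemma cube_subset_cube_iff {d n m : ℕ} {l k : Fin d → ℕ} :
    cube d (n + m) l ⊆ cube d n k ↔ ∀ i, k i * 5 ^ m < l i + 5 ^ m ∧ l i ≤ k i * 5 ^ m := by
  have hpos : (0 : ℝ) < 5 ^ (n + m) := by positivity
  constructor
  · intro h i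
    let c : Pt d := WithLp.toLp 2 fun i => ((l i : ℝ) - 1 / 2) / 5 ^ (n + m)
    have hc : c ∈ cube d (n + m) l := fun i => by
      constructor <;> simp only [c] <;> gcongr <;> linarith
    obtain ⟨hlo, hhi⟩ := h hc i
    simp only [c] at hlo hhi
    rw [div_five_pow_eq_mul_div _ n m, div_le_div_iff_of_pos_right hpos] at hlo hhi
    constructor
    · exact_mod_cast (by linarith : (k i : ℝ) * 5 ^ m < l i + 5 ^ m)
    · exact Nat.lt_succ_iff.mp (by exact_mod_cast (by linarith : (l i : ℝ) < k i * 5 ^ m + 1))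
  · intro h x hx i
    obtain ⟨hlo, hhi⟩ := h i
    have hlo' : (k i : ℝ) * 5 ^ m + 1 ≤ l i + 5 ^ m := by exact_mod_cast hlo
    have hhi' : (l i : ℝ) ≤ k i * 5 ^ m := by exact_mod_cast hhi
    rw [div_five_pow_eq_mul_div _ n m, div_five_pow_eq_mul_div (k i : ℝ) n m]
    constructor
    · calc ((k i : ℝ) - 1) * 5 ^ m / 5 ^ (n + m) ≤ ((l i : ℝ) - 1) / 5 ^ (n + m) := by
            gcongr; linarith
        _ ≤ x i := (hx i).1
    · calc x i ≤ (l i : ℝ) / 5 ^ (n + m) := (hx i).2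
        _ ≤ (k i : ℝ) * 5 ^ m / 5 ^ (n + m) := by gcongr

lemma index_adjacent_of_cube_inter {d n : ℕ} {l l' : Fin d → ℕ}
    (h : (cube d n l ∩ cube d n l').Nonempty) (i : Fin d) : l' i ≤ l i + 1 ∧ l i ≤ l' i + 1 := by
  obtain ⟨x, hx, hx'⟩ := h
  have hpos : (0 : ℝ) < 5 ^ n := by positivity
  have h₁ := div_le_div_iff_of_pos_right hpos |>.1 ((hx' i).1.trans (hx i).2)
  have h₂ := div_le_div_iff_of_pos_right hpos |>.1 ((hx i).1.trans (hx' i).2)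
  constructor
  · exact_mod_cast (by linarith : (l' i : ℝ) ≤ l i + 1)
  · exact_mod_cast (by linarith : (l i : ℝ) ≤ l' i + 1)

lemma qtwo_eq_cube (d : ℕ) : Qtwo d = cube d 1 fun _ => 3 := by
  ext x
  simp only [Qtwo, cube, mem_Icc]
  norm_num

lemma nonempty_of_mem_qcolOf {d n : ℕ} {A : Set (Pt d)} {Q : Set (Pt d)}
    (hQ : Q ∈ QcolOf d n A) : Q.Nonempty :=
  hQ.2.mono fun _ hx => interior_subset hx.1

lemma mem_qcolOf_of_subset {d n n' : ℕ} {A B Q Q' : Set (Pt d)} (hQ' : Q' ∈ QcolOf d n' A)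
    (hQ : Q ∈ Qcol d n) (hQ'Q : Q' ⊆ Q) (hAB : A ⊆ B) : Q ∈ QcolOf d n B :=
  ⟨hQ, hQ'.2.mono (inter_subset_inter (interior_mono hQ'Q) hAB)⟩

lemma qcolOf_finite (d n : ℕ) (A : Set (Pt d)) : (QcolOf d n A).Finite := by
  refine ((Set.Finite.pi fun _ => Set.finite_Iic (5 ^ n)).image (cube d n)).subset ?_
  rintro Q ⟨⟨l, hl, rfl⟩, -⟩
  exact ⟨l, mem_univ_pi.2 fun i => (hl i).2, rfl⟩

lemma fset_subset_f1 (d : ℕ) : Fset d ⊆ F1 d :=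
  iInter_subset (Fn d) 1

lemma energy_nonneg (d n : ℕ) (p : ℝ) (f : Set (Pt d) → ℝ) : 0 ≤ energy d n p f := by
  refine mul_nonneg (by norm_num) (tsum_nonneg fun Q => tsum_nonneg fun Q' => ?_)
  split_ifs
  exacts [Real.rpow_nonneg (abs_nonneg _) _, le_rfl]

lemma conduct_le_energy {d n m : ℕ} {p : ℝ} {A₁ A₂ : Set (Set (Pt d))} {f : Set (Pt d) → ℝ}
    (h₁ : ∀ Q ∈ Sm d n m A₁, f Q = 1) (h₂ : ∀ Q ∈ Sm d n m A₂, f Q = 0) :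
    conduct d n m p A₁ A₂ ≤ energy d (n + m) p f :=
  csInf_le ⟨0, by rintro _ ⟨g, -, -, rfl⟩; exact energy_nonneg _ _ _ g⟩ ⟨f, h₁, h₂, rfl⟩

lemma energy_le_card {d n : ℕ} {p : ℝ} (hp : 0 < p) {f : Set (Pt d) → ℝ}
    (hf : ∀ Q, f Q ∈ Icc (0 : ℝ) 1) (P : Finset (Set (Pt d) × Set (Pt d)))
    (hP : ∀ Q ∈ QcolOf d n (Fset d), ∀ Q' ∈ QcolOf d n (Fset d),
      (Q ∩ Q').Nonempty → f Q ≠ f Q' → (Q, Q') ∈ P ∨ (Q', Q) ∈ P) :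
    energy d n p f ≤ P.card := by
  let S := QcolOf d n (Fset d)
  let : Fintype S := (qcolOf_finite d n _).fintype
  let ind : S → S → ℝ := fun Q Q' => if ((Q : Set (Pt d)), (Q' : Set (Pt d))) ∈ P then 1 else 0
  have hind : ∀ Q Q', 0 ≤ ind Q Q' := fun Q Q' => by simp only [ind]; split_ifs <;> norm_num
  have hterm : ∀ Q Q' : S, (if ((Q : Set (Pt d)) ∩ Q').Nonempty then |f Q - f Q'| ^ p else 0)
      ≤ ind Q Q' + ind Q' Q := by
    intro Q Q'
    split_ifs with hQQ'
    · by_cases heq : f Q = f Q'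
      · rw [heq, sub_self, abs_zero, Real.zero_rpow hp.ne']
        exact add_nonneg (hind _ _) (hind _ _)
      · obtain ⟨hQ₀, hQ₁⟩ := hf Q
        obtain ⟨hQ'₀, hQ'₁⟩ := hf Q'
        have hle : |f Q - f Q'| ^ p ≤ 1 :=
          Real.rpow_le_one (abs_nonneg _) (abs_sub_le_iff.2 ⟨by linarith, by linarith⟩) hp.le
        rcases hP Q Q.2 Q' Q'.2 hQQ' heq with h | h
        · linarith [hind Q' Q, show ind Q Q' = 1 from if_pos h]
        · linarith [hind Q Q', show ind Q' Q = 1 from if_pos h]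
    · exact add_nonneg (hind _ _) (hind _ _)
  have hcount : ∑ Q : S, ∑ Q' : S, ind Q Q' ≤ P.card := by
    rw [← Fintype.sum_prod_type', Finset.sum_boole, Nat.cast_le]
    refine Finset.card_le_card_of_injOn (fun z => ((z.1 : Set (Pt d)), (z.2 : Set (Pt d))))
      (fun z hz => (Finset.mem_filter.1 hz).2) fun z _ z' _ h => ?_
    simp only [Prod.mk.injEq] at h
    exact Prod.ext (Subtype.ext h.1) (Subtype.ext h.2)
  have hcount' : ∑ Q : S, ∑ Q' : S, ind Q' Q ≤ P.card := by
    rw [Finset.sum_comm]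
    exact hcount
  calc energy d n p f
      ≤ 1 / 2 * ∑ Q : S, ∑ Q' : S, (ind Q Q' + ind Q' Q) := by
        simp only [energy, tsum_fintype]
        gcongr with Q _ Q' _
        exact hterm Q Q'
    _ ≤ P.card := by
        simp only [Finset.sum_add_distrib]
        linarith

lemma cube_arm_notMem_qcolOf_f1 {k : Fin 2 → ℕ} {i j : Fin 2} (hij : i ≠ j) (hj : k j = 3)
    (hi : k i = 2 ∨ k i = 4) : cube 2 1 k ∉ QcolOf 2 1 (F1 2) := by
  rintro ⟨-, y, hy, hyF⟩
  rw [interior_cube] at hy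
  have hyj : y j ∈ Ioo (2 / 5 : ℝ) (3 / 5) := by
    have := hy j
    rw [hj] at this
    norm_num at this
    exact this
  have hyi : y i ∈ Ioo (1 / 5 : ℝ) (2 / 5) ∪ Ioo (3 / 5 : ℝ) (4 / 5) := by
    have := hy i
    rcases hi with hi | hi <;> rw [hi] at this <;> norm_num at this
    exacts [Or.inl this, Or.inr this]
  have hother : ∀ j', j' ≠ i → y j' ∈ Ioo (2 / 5 : ℝ) (3 / 5) := fun j' hj' => by
    rwa [show j' = j by omega]
  exact hyF.2 (mem_iUnion.2 ⟨i, fun j' h => hother j' h.ne, hyi, fun j' h => hother j' h.ne'⟩)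

def innerCornerIndex (m : ℕ) (s : Fin 2 → Bool) : Fin 2 → ℕ :=
  fun i => if s i then 3 * 5 ^ m else 2 * 5 ^ m + 1

def outerCornerIndex (m : ℕ) (s : Fin 2 → Bool) : Fin 2 → ℕ :=
  fun i => if s i then 3 * 5 ^ m + 1 else 2 * 5 ^ m

/-- Pairs (corner subcube of `Q₂`, its diagonal neighbour outside `Q₂`) at level `1 + m`. -/
noncomputable def cornerPairs (m : ℕ) : Finset (Set (Pt 2) × Set (Pt 2)) :=
  Finset.univ.image fun s =>
    (cube 2 (1 + m) (innerCornerIndex m s), cube 2 (1 + m) (outerCornerIndex m s))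

lemma card_cornerPairs_le (m : ℕ) : (cornerPairs m).card ≤ 4 :=
  Finset.card_image_le.trans (by simp)

lemma mem_cornerPairs_of_inter_nonempty {m : ℕ} {Q Q' : Set (Pt 2)}
    (hQ : Q ∈ QcolOf 2 (1 + m) (Fset 2)) (hQ' : Q' ∈ QcolOf 2 (1 + m) (Fset 2))
    (hQQ' : (Q ∩ Q').Nonempty) (hin : Q ⊆ Qtwo 2) (hout : ¬ Q' ⊆ Qtwo 2) :
    (Q, Q') ∈ cornerPairs m := by
  obtain ⟨l, -, rfl⟩ := hQ.1
  obtain ⟨l', -, rfl⟩ := hQ'.1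
  have hM : 1 ≤ 5 ^ m := Nat.one_le_pow _ _ (by norm_num)
  have hadj := index_adjacent_of_cube_inter hQQ'
  rw [qtwo_eq_cube, cube_subset_cube_iff] at hin hout
  let k : Fin 2 → ℕ := fun i => if l' i ≤ 2 * 5 ^ m then 2 else if l' i ≤ 3 * 5 ^ m then 3 else 4
  have hk : cube 2 (1 + m) l' ⊆ cube 2 1 k := cube_subset_cube_iff.2 fun i => by
    have := hin i
    have := hadj i
    simp only [k]
    split_ifs <;> omega
  have hkF : cube 2 1 k ∈ QcolOf 2 1 (F1 2) :=
    mem_qcolOf_of_subset hQ' ⟨k, fun i => by simp only [k]; split_ifs <;> norm_num, rfl⟩ hk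
      (fset_subset_f1 2)
  have h01 : ¬(k 1 = 3 ∧ (k 0 = 2 ∨ k 0 = 4)) := fun h =>
    cube_arm_notMem_qcolOf_f1 (i := 0) (j := 1) (by decide) h.1 h.2 hkF
  have h10 : ¬(k 0 = 3 ∧ (k 1 = 2 ∨ k 1 = 4)) := fun h =>
    cube_arm_notMem_qcolOf_f1 (i := 1) (j := 0) (by decide) h.1 h.2 hkF
  have hcorner : ∀ i, (l' i = 2 * 5 ^ m ∧ l i = 2 * 5 ^ m + 1) ∨
      (l' i = 3 * 5 ^ m + 1 ∧ l i = 3 * 5 ^ m) := by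
    rw [Fin.forall_fin_two] at hin hadj hout ⊢
    simp only [k] at h01 h10
    split_ifs at h01 h10 <;> omega
  refine Finset.mem_image.2 ⟨fun i => decide (3 * 5 ^ m < l' i), Finset.mem_univ _, ?_⟩
  rw [Prod.mk.injEq]
  constructor <;> congr 1 <;> funext i <;> rcases hcorner i with h | h <;>
    simp [innerCornerIndex, outerCornerIndex, h]

theorem statement4_general (p : ℝ) (hp : 1 < p) (m : ℕ) :
    conduct 2 1 m p {Qtwo 2} (GamC 2 1 (Qtwo 2)) ≤ 4 := by
  let f : Set (Pt 2) → ℝ := fun Q => if Q ⊆ Qtwo 2 then 1 else 0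
  have hf₁ : ∀ Q ∈ Sm 2 1 m {Qtwo 2}, f Q = 1 := by
    rintro Q ⟨-, _, rfl, hQ⟩
    exact if_pos hQ
  have hf₀ : ∀ Q ∈ Sm 2 1 m (GamC 2 1 (Qtwo 2)), f Q = 0 := by
    rintro Q ⟨hQ, Q', ⟨hQ'F, hQ'⟩, hQQ'⟩
    obtain ⟨x, hx⟩ := nonempty_of_mem_qcolOf hQ
    exact if_neg fun hQtwo => hQ' ⟨hQ'F, x, hQQ' hx, hQtwo hx⟩
  have hjump : ∀ Q ∈ QcolOf 2 (1 + m) (Fset 2), ∀ Q' ∈ QcolOf 2 (1 + m) (Fset 2),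
      (Q ∩ Q').Nonempty → f Q ≠ f Q' → (Q, Q') ∈ cornerPairs m ∨ (Q', Q) ∈ cornerPairs m := by
    intro Q hQ Q' hQ' hQQ' hne
    by_cases hin : Q ⊆ Qtwo 2
    · have hout : ¬ Q' ⊆ Qtwo 2 := fun hin' => hne (by simp [f, hin, hin'])
      exact .inl (mem_cornerPairs_of_inter_nonempty hQ hQ' hQQ' hin hout)
    · have hin' : Q' ⊆ Qtwo 2 := by_contra fun hout => hne (by simp [f, hin, hout])
      exact .inr (mem_cornerPairs_of_inter_nonempty hQ' hQ (inter_comm Q Q' ▸ hQQ') hin' hin)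
  calc conduct 2 1 m p {Qtwo 2} (GamC 2 1 (Qtwo 2))
      ≤ energy 2 (1 + m) p f := conduct_le_energy hf₁ hf₀
    _ ≤ (cornerPairs m).card :=
        energy_le_card (by linarith) (fun Q => by simp only [f]; split_ifs <;> norm_num) _ hjump
    _ ≤ 4 := by exact_mod_cast card_cornerPairs_le m

/-- Upper bound on the conductance of the center cube `Q₂ = [2/5,3/5]²` in `F⁽²⁾`. -/
theorem statement4 (p : ℝ) (hp : 1 < p) (m : ℕ) (hm : 1 ≤ m) :
    conduct 2 1 m p {Qtwo 2} (GamC 2 1 (Qtwo 2)) ≤ 4 :=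
  statement4_general p hp m
end
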